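/- arXiv:2103.16264 — 6 statements merged into one kernel-verified Lean document; each statement's English description precedes it below -/
import Mathlib

section
/- Let T > 0 and let p, q : [0, T] → ℝ be functions. Suppose there is a finite set 𝒯 = {T_1, …, T_n} ⊆ [0, T], independent of x, such that for every x > 0 the supremum over [0, T] of the function t ↦ p(t) + x·q(t) is attained at a unique point t_x, and t_x ∈ 𝒯. Define f̄(x) := p(t_x) + x·q(t_x) for x > 0. Then for every x > 0 the function f̄ is differentiable at x with derivative f̄'(x) = q(t_x). -/
open Set

/-- If there is a finite set `𝒯 ⊆ [0, T]`, independent of `x`, such that for every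
`x > 0` the supremum of `t ↦ p t + x * q t` over `[0, T]` is attained at the unique point `tx x`
and `tx x ∈ 𝒯`, then the maximum-value function `f̄ : x ↦ p (tx x) + x * q (tx x)` is
differentiable at every `x > 0` with derivative `q (tx x)`. -/
theorem stmt_1 (T : ℝ) (hT : 0 < T) (p q : ℝ → ℝ)
    (𝒯 : Finset ℝ) (h𝒯 : (𝒯 : Set ℝ) ⊆ Set.Icc 0 T)
    (tx : ℝ → ℝ)
    (htx_mem : ∀ x : ℝ, 0 < x → tx x ∈ 𝒯)
    (htx_max : ∀ x : ℝ, 0 < x → ∀ t ∈ Set.Icc 0 T,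
      p t + x * q t ≤ p (tx x) + x * q (tx x))
    (htx_uniq : ∀ x : ℝ, 0 < x → ∀ t ∈ Set.Icc 0 T,
      p t + x * q t = p (tx x) + x * q (tx x) → t = tx x) :
    ∀ x : ℝ, 0 < x → HasDerivAt (fun y => p (tx y) + y * q (tx y)) (q (tx x)) x := by
  intro x hx
  set t0 := tx x with ht0
  -- strict inequality at other points of 𝒯
  have hstrict : ∀ t ∈ 𝒯, t ≠ t0 → p t + x * q t < p t0 + x * q t0 := by
    intro t ht hne
    rcases lt_or_eq_of_le (htx_max x hx t (h𝒯 ht)) with h | h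
    · exact h
    · exact absurd (htx_uniq x hx t (h𝒯 ht) h) hne
  -- eventually, for all t in 𝒯 other than t0, strict inequality holds
  have hev : ∀ᶠ y in nhds x, ∀ t ∈ 𝒯, t ≠ t0 → p t + y * q t < p t0 + y * q t0 := by
    rw [Filter.eventually_all_finset]
    intro t ht
    by_cases hne : t = t0
    · filter_upwards with y h; exact absurd hne h
    · have hcont : Continuous fun y : ℝ => (p t0 + y * q t0) - (p t + y * q t) :=
        ((continuous_const.add (continuous_id.mul continuous_const)).sub
          (continuous_const.add (continuous_id.mul continuous_const)))
      have := hcont.continuousAt (x := x)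
      have hpos : (0:ℝ) < (p t0 + x * q t0) - (p t + x * q t) :=
        sub_pos.mpr (hstrict t ht hne)
      have := continuousAt_const.eventually_lt this hpos
      filter_upwards [this] with y hy _
      linarith [hy]
  have hev2 : ∀ᶠ y in nhds x, 0 < y := eventually_gt_nhds hx
  have heq : ∀ᶠ y in nhds x, tx y = t0 := by
    filter_upwards [hev, hev2] with y hy hy0
    by_contra hne
    have h1 : p (tx y) + y * q (tx y) < p t0 + y * q t0 :=
      hy (tx y) (htx_mem y hy0) hne
    have h2 : p t0 + y * q t0 ≤ p (tx y) + y * q (tx y) :=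
      htx_max y hy0 t0 (h𝒯 (htx_mem x hx))
    linarith
  have hd : HasDerivAt (fun y => p t0 + y * q t0) (q t0) x := by
    simpa [mul_comm] using (hasDerivAt_id x).const_mul (q t0) |>.const_add (p t0)
  refine hd.congr_of_eventuallyEq ?_
  filter_upwards [heq] with y hy
  rw [hy]
end

section
/- Let Z_1 and Z_2 be independent standard Gaussian random variables on a probability space (Ω, 𝓕, P), let μ_1, μ_2 ∈ ℝ, σ_1 > 0, σ_2 > 0, and ρ ∈ (−1, 1). Define X := μ_1 + σ_1·(ρ·Z_2 + √(1 − ρ²)·Z_1) and Y := μ_2 + σ_2·Z_2, so that (X, Y) is bivariate Gaussian with means μ_1, μ_2, standard deviations σ_1, σ_2 and correlation ρ. Then, almost surely, E[|X| | σ(Y)] = m(Y)·(1 − 2Φ(c(Y))) + 2σ_1√(1 − ρ²)·φ(c(Y)), where m(y) := μ_1 + ρ(σ_1/σ_2)(y − μ_2) and c(y) := −m(y)/(σ_1√(1 − ρ²)). -/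
/-!
With `s = σ₁√(1 - ρ²)` one has `X = m(Y) + s·Z₁`, and `Z₁` is independent of `Y`, so
`E[|X| | σ(Y)] = h(Y)` with `h(y) = E|m(y) + s·Z|` for a standard Gaussian `Z`. This folded-normal
mean follows from `|t| = t + 2·max(-t, 0)`: the negative part of `m(y) + s·Z` lives on
`{Z ≤ c(y)}`, where `∫_{z ≤ c} z φ(z) dz = -φ(c)` because `φ' = -z·φ`.
-/

open MeasureTheory ProbabilityTheory Real

/-- The standard normal probability density function `φ`. -/
noncomputable def stdGaussianPDF (z : ℝ) : ℝ :=
  Real.exp (-z ^ 2 / 2) / Real.sqrt (2 * Real.pi)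

/-- The standard normal cumulative distribution function `Φ`. -/
noncomputable def stdGaussianCDF (y : ℝ) : ℝ :=
  ∫ z in Set.Iic y, stdGaussianPDF z

open Set Filter Topology

lemma gaussianPDFReal_zero_one : gaussianPDFReal 0 1 = stdGaussianPDF := by
  ext x
  simp [gaussianPDFReal, stdGaussianPDF, div_eq_mul_inv, mul_comm]

lemma hasDerivAt_stdGaussianPDF (x : ℝ) :
    HasDerivAt stdGaussianPDF (-x * stdGaussianPDF x) x := by
  have h : HasDerivAt (fun y : ℝ => -y ^ 2 / 2) (-x) x :=
    ((hasDerivAt_pow 2 x).neg.div_const 2).congr_deriv (by norm_num; ring)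
  refine (h.exp.div_const (Real.sqrt (2 * Real.pi))).congr_deriv ?_
  simp only [stdGaussianPDF]
  ring

lemma tendsto_stdGaussianPDF_atBot : Tendsto stdGaussianPDF atBot (𝓝 0) := by
  have hsq : Tendsto (fun x : ℝ => x ^ 2) atBot atTop :=
    ((tendsto_pow_atTop two_ne_zero).comp tendsto_neg_atBot_atTop).congr fun x => by simp
  have h := (tendsto_exp_atBot.comp
    ((tendsto_neg_atTop_atBot.comp hsq).atBot_div_const two_pos)).div_const
    (Real.sqrt (2 * Real.pi))
  rw [zero_div] at h
  exact h.congr fun x => by simp [stdGaussianPDF, neg_div]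

lemma integrable_stdGaussianPDF_mul_id : Integrable fun x => stdGaussianPDF x * x := by
  refine ((integrable_mul_exp_neg_mul_sq (b := 1 / 2) (by norm_num)).div_const
    (Real.sqrt (2 * Real.pi))).congr (ae_of_all _ fun x => ?_)
  simp only [stdGaussianPDF]
  ring_nf

lemma setIntegral_gaussianReal_zero_one {s : Set ℝ} (hs : MeasurableSet s) (f : ℝ → ℝ) :
    ∫ x in s, f x ∂gaussianReal 0 1 = ∫ x in s, stdGaussianPDF x * f x := by
  rw [← integral_indicator hs, integral_gaussianReal_eq_integral_smul one_ne_zero,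
    ← integral_indicator hs, gaussianPDFReal_zero_one]
  congr 1 with x
  by_cases hx : x ∈ s <;> simp [hx]

lemma measureReal_gaussianReal_Iic (c : ℝ) :
    (gaussianReal 0 1).real (Iic c) = stdGaussianCDF c := by
  simpa [stdGaussianCDF] using
    setIntegral_gaussianReal_zero_one measurableSet_Iic (fun _ => (1 : ℝ))

lemma setIntegral_Iic_id_gaussianReal (c : ℝ) :
    ∫ x in Iic c, x ∂gaussianReal 0 1 = -stdGaussianPDF c := by
  rw [setIntegral_gaussianReal_zero_one measurableSet_Iic]
  have := integral_Iic_of_hasDerivAt_of_tendsto' (a := c)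
    (fun x _ => (hasDerivAt_stdGaussianPDF x).neg)
    (by simpa [mul_comm] using integrable_stdGaussianPDF_mul_id.integrableOn)
    tendsto_stdGaussianPDF_atBot.neg
  simpa [mul_comm] using this

lemma integral_abs_const_add_mul_gaussianReal (a : ℝ) {s : ℝ} (hs : 0 < s) :
    ∫ z, |a + s * z| ∂gaussianReal 0 1
      = a * (1 - 2 * stdGaussianCDF (-a / s)) + 2 * s * stdGaussianPDF (-a / s) := by
  set c := -a / s
  have hle : ∀ z, z ≤ c ↔ a + s * z ≤ 0 := fun z => by
    rw [le_div_iff₀ hs]; constructor <;> intro h <;> linarith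
  have habs : ∀ z,
      |a + s * z| = (a + s * z) + 2 * (Iic c).indicator (fun z => -(a + s * z)) z := by
    intro z
    by_cases hz : z ≤ c
    · rw [indicator_of_mem (show z ∈ Iic c from hz), abs_of_nonpos ((hle z).1 hz)]
      ring
    · rw [indicator_of_notMem (show z ∉ Iic c from hz),
        abs_of_nonneg (not_le.1 (mt (hle z).2 hz)).le]
      ring
  have hid : Integrable (fun z : ℝ => z) (gaussianReal 0 1) :=
    memLp_one_iff_integrable.1 (memLp_id_gaussianReal 1)
  have haff : Integrable (fun z => a + s * z) (gaussianReal 0 1) :=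
    (integrable_const a).add (hid.const_mul s)
  simp_rw [habs]
  rw [integral_add haff ((haff.fun_neg.indicator measurableSet_Iic).const_mul 2),
    integral_const_mul, integral_indicator measurableSet_Iic, integral_add (integrable_const a) (hid.const_mul s),
    integral_neg, integral_add (integrable_const a).integrableOn (hid.const_mul s).integrableOn,
    integral_const_mul, integral_const_mul, integral_id_gaussianReal, setIntegral_const,
    measureReal_gaussianReal_Iic, setIntegral_Iic_id_gaussianReal]
  simp only [integral_const, probReal_univ, smul_eq_mul]
  ring

theorem ProbabilityTheory.IndepFun.condExp_comp_ae_eq_integral_map {Ω β γ F : Type*}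
    {mΩ : MeasurableSpace Ω} {P : Measure Ω} [IsFiniteMeasure P] [MeasurableSpace β]
    [MeasurableSpace γ] [StandardBorelSpace γ] [Nonempty γ]
    [NormedAddCommGroup F] [NormedSpace ℝ F] [CompleteSpace F]
    {V : Ω → β} {U : Ω → γ} {f : β × γ → F} (hVU : IndepFun V U P)
    (hV : Measurable V) (hU : Measurable U) (hf : StronglyMeasurable f)
    (hint : Integrable (fun ω => f (V ω, U ω)) P) :
    P[fun ω => f (V ω, U ω) | MeasurableSpace.comap V inferInstance]
      =ᵐ[P] fun ω => ∫ u, f (V ω, u) ∂(P.map U) := by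
  have hκ : condDistrib U V P =ᵐ[P.map V] Kernel.const β (P.map U) := by
    rw [condDistrib_ae_eq_iff_measure_eq_compProd V hU.aemeasurable, Measure.compProd_const]
    exact (indepFun_iff_map_prod_eq_prod_map_map hV.aemeasurable hU.aemeasurable).1 hVU
  filter_upwards [condExp_prod_ae_eq_integral_condDistrib hV hU.aemeasurable hf hint,
    ae_of_ae_map hV.aemeasurable hκ] with ω hcond hconst
  rw [hcond, hconst, Kernel.const_apply]

lemma integrable_of_map_eq_gaussianReal {Ω : Type*} {mΩ : MeasurableSpace Ω} {P : Measure Ω}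
    {Z : Ω → ℝ} (hZ : Measurable Z) {μ : ℝ} {v : NNReal} (hlaw : P.map Z = gaussianReal μ v) :
    Integrable Z P := by
  have hid : Integrable id (P.map Z) := by
    rw [hlaw]; exact memLp_one_iff_integrable.1 (memLp_id_gaussianReal 1)
  exact (integrable_map_measure aestronglyMeasurable_id hZ.aemeasurable).1 hid

/-- For a bivariate Gaussian pair `(X, Y)` with means `μ₁, μ₂`, standard
deviations `σ₁, σ₂ > 0` and correlation `ρ ∈ (-1, 1)`, built from independent standard
Gaussians `Z₁, Z₂`, almost surely
`E[|X| | σ(Y)] = m(Y)·(1 − 2Φ(c(Y))) + 2σ₁√(1 − ρ²)·φ(c(Y))` where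
`m(y) = μ₁ + ρ(σ₁/σ₂)(y − μ₂)` and `c(y) = −m(y)/(σ₁√(1 − ρ²))`. -/
theorem stmt_2 {Ω : Type*} [MeasurableSpace Ω] (P : Measure Ω) [IsProbabilityMeasure P]
    (Z₁ Z₂ : Ω → ℝ) (hZ₁ : Measurable Z₁) (hZ₂ : Measurable Z₂)
    (hindep : IndepFun Z₁ Z₂ P)
    (hlaw₁ : Measure.map Z₁ P = gaussianReal 0 1)
    (hlaw₂ : Measure.map Z₂ P = gaussianReal 0 1)
    (μ₁ μ₂ σ₁ σ₂ ρ : ℝ) (hσ₁ : 0 < σ₁) (hσ₂ : 0 < σ₂) (hρ : ρ ∈ Set.Ioo (-1 : ℝ) 1)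
    (X Y : Ω → ℝ)
    (hX : X = fun ω => μ₁ + σ₁ * (ρ * Z₂ ω + Real.sqrt (1 - ρ ^ 2) * Z₁ ω))
    (hY : Y = fun ω => μ₂ + σ₂ * Z₂ ω)
    (m : ℝ → ℝ) (hm : m = fun y => μ₁ + ρ * (σ₁ / σ₂) * (y - μ₂))
    (c : ℝ → ℝ) (hc : c = fun y => -(m y) / (σ₁ * Real.sqrt (1 - ρ ^ 2))) :
    ∀ᵐ ω ∂P,
      (P[fun ω => |X ω| | MeasurableSpace.comap Y inferInstance]) ω
        = m (Y ω) * (1 - 2 * stdGaussianCDF (c (Y ω)))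
          + 2 * σ₁ * Real.sqrt (1 - ρ ^ 2) * stdGaussianPDF (c (Y ω)) := by
  set s := σ₁ * Real.sqrt (1 - ρ ^ 2)
  have hs : 0 < s := mul_pos hσ₁ (Real.sqrt_pos.2 (by nlinarith [hρ.1, hρ.2]))
  have hYZ₂ : Measurable fun z : ℝ => μ₂ + σ₂ * z := by fun_prop
  have hYmeas : Measurable Y := hY ▸ hYZ₂.comp hZ₂
  have hm_meas : Measurable m := by rw [hm]; fun_prop
  have hXY : ∀ ω, X ω = m (Y ω) + s * Z₁ ω := fun ω => by
    simp only [hX, hY, hm, s]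
    field_simp
    ring
  have hindep' : IndepFun Y Z₁ P := hY ▸ hindep.symm.comp hYZ₂ measurable_id
  have hint : Integrable (fun ω => |X ω|) P := by
    have hZ₁int := integrable_of_map_eq_gaussianReal hZ₁ hlaw₁
    have hZ₂int := integrable_of_map_eq_gaussianReal hZ₂ hlaw₂
    rw [hX]
    exact ((integrable_const μ₁).add
      (((hZ₂int.const_mul ρ).add (hZ₁int.const_mul _)).const_mul σ₁)).abs
  simp only [hXY] at hint ⊢
  filter_upwards [hindep'.condExp_comp_ae_eq_integral_map (f := fun p => |m p.1 + s * p.2|)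
    hYmeas hZ₁ (by fun_prop) hint] with ω hω
  rw [hω, hlaw₁, integral_abs_const_add_mul_gaussianReal _ hs, hc, mul_assoc 2 σ₁]
end

section
/- For all a > 0, b > 0 and T > 0, it holds that ∫_0^T (a·b/(π·θ^{1/2}·(T−θ)^{3/2}))·e^{−a²/(2θ) − b²/(2(T−θ))} dθ = (2a/√(2πT))·e^{−(a+b)²/(2T)}. -/
/-!
Substituting `s = √(θ / (T - θ))` turns the integrand into
`(2ab / (πT)) e^{-(a+b)²/(2T)} e^{-(bs - a/s)²/(2T)} ds`, a Cauchy–Schlömilch integral over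
`(0, ∞)`. With `G x = ∫₀ˣ e^{-t²/2} dt`, a primitive of the latter is
`G ((bs - a/s)/√T) + e^{2ab/T} G ((bs + a/s)/√T)`. Composed with the substitution it is a
primitive of the original integrand on `(0, T)`, and since the integrand is positive the integral
is the difference of its limits at `T` and `0`, computed from `G (±∞) = ±√(2π)/2`.
-/

open MeasureTheory Real

open Filter Set Topology

theorem intervalIntegral.integral_eq_sub_of_hasDerivAt_of_tendsto_of_nonneg {f f' : ℝ → ℝ}
    {a b fa fb : ℝ} (hab : a < b) (hderiv : ∀ x ∈ Ioo a b, HasDerivAt f (f' x) x)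
    (hnonneg : ∀ x ∈ Ioo a b, 0 ≤ f' x) (ha : Tendsto f (𝓝[>] a) (𝓝 fa))
    (hb : Tendsto f (𝓝[<] b) (𝓝 fb)) :
    ∫ x in a..b, f' x = fb - fa := by
  classical
  -- Extended by its limits, `f` is continuous on `[a, b]`, so `f' ≥ 0` makes `f'` integrable.
  set F : ℝ → ℝ := Function.update (Function.update f a fa) b fb
  have hFf : EqOn F f (Ioo a b) := fun x hx => by
    simp only [F, Function.update_of_ne hx.2.ne, Function.update_of_ne hx.1.ne']
  have hFderiv : ∀ x ∈ Ioo a b, HasDerivAt F (f' x) x := fun x hx =>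
    (hderiv x hx).congr_of_eventuallyEq (hFf.eventuallyEq_of_mem (Ioo_mem_nhds hx.1 hx.2))
  have hFcont : ContinuousOn F (Icc a b) := by
    rw [continuousOn_update_iff, continuousOn_update_iff, Icc_sdiff_right, Ico_sdiff_left]
    refine ⟨⟨fun x hx => ((hderiv x hx).continuousAt.continuousWithinAt), fun _ => ?_⟩, fun _ => ?_⟩
    · exact ha.mono_left (nhdsWithin_mono _ Ioo_subset_Ioi_self)
    · refine (hb.congr' ?_).mono_left (nhdsWithin_mono _ Ico_subset_Iio_self)
      filter_upwards [Ioo_mem_nhdsLT hab] with x hx using (Function.update_of_ne hx.1.ne' _ _).symm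
  refine integral_eq_sub_of_hasDerivAt_of_tendsto hab hderiv ?_ ha hb
  exact (intervalIntegrable_iff_integrableOn_Ioc_of_le hab.le).2
    (integrableOn_deriv_of_nonneg hFcont hFderiv hnonneg)

noncomputable def gaussPrimitive (x : ℝ) : ℝ := ∫ t in (0 : ℝ)..x, exp (-t ^ 2 / 2)

lemma hasDerivAt_gaussPrimitive (x : ℝ) : HasDerivAt gaussPrimitive (exp (-x ^ 2 / 2)) x :=
  ((by fun_prop : Continuous fun t : ℝ => exp (-t ^ 2 / 2)).integral_hasStrictDerivAt 0 x).hasDerivAt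

lemma gaussPrimitive_neg (x : ℝ) : gaussPrimitive (-x) = -gaussPrimitive x := by
  simp only [gaussPrimitive]
  rw [← intervalIntegral.integral_symm, ← neg_zero, ← intervalIntegral.integral_comp_neg]
  simp

lemma tendsto_gaussPrimitive_atTop :
    Tendsto gaussPrimitive atTop (𝓝 (√(2 * π) / 2)) := by
  have hint : Integrable fun t : ℝ => exp (-t ^ 2 / 2) := by
    simpa [div_eq_inv_mul, mul_comm] using integrable_exp_neg_mul_sq (b := (1 / 2 : ℝ)) (by norm_num)
  have h := intervalIntegral_tendsto_integral_Ioi 0 hint.integrableOn tendsto_id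
  have hval : ∫ t in Ioi (0 : ℝ), exp (-t ^ 2 / 2) = √(2 * π) / 2 := by
    convert integral_gaussian_Ioi (1 / 2) using 3 <;> ring_nf
  rwa [hval] at h

lemma tendsto_gaussPrimitive_atBot :
    Tendsto gaussPrimitive atBot (𝓝 (-(√(2 * π) / 2))) := by
  have h := (tendsto_gaussPrimitive_atTop.comp tendsto_neg_atBot_atTop).neg
  refine h.congr fun x => ?_
  simp [gaussPrimitive_neg]

/-- Since `(b s + a / s)² = (b s - a / s)² + 4 a b`, the factor `exp (2 a b / σ²)` gives both
Gaussian terms the same density. -/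
noncomputable def schlomilchPrimitive (a b σ s : ℝ) : ℝ :=
  gaussPrimitive ((b * s - a / s) / σ) +
    exp (2 * a * b / σ ^ 2) * gaussPrimitive ((b * s + a / s) / σ)

lemma hasDerivAt_schlomilchPrimitive (a b : ℝ) {σ s : ℝ} (hσ : σ ≠ 0) (hs : s ≠ 0) :
    HasDerivAt (schlomilchPrimitive a b σ) (2 * b / σ * exp (-((b * s - a / s) / σ) ^ 2 / 2)) s := by
  have hinv : HasDerivAt (fun s => a / s) (-(a / s ^ 2)) s := by
    simpa [div_eq_mul_inv] using (hasDerivAt_inv hs).const_mul a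
  have hminus := (((hasDerivAt_id' s).const_mul b).sub hinv).div_const σ
  have hplus := (((hasDerivAt_id' s).const_mul b).add hinv).div_const σ
  have hexp : exp (2 * a * b / σ ^ 2) * exp (-((b * s + a / s) / σ) ^ 2 / 2)
      = exp (-((b * s - a / s) / σ) ^ 2 / 2) := by
    rw [← exp_add]; congr 1; field_simp; ring
  refine (((hasDerivAt_gaussPrimitive _).comp s hminus).add
    (((hasDerivAt_gaussPrimitive _).comp s hplus).const_mul _)).congr_deriv ?_
  simp only [Pi.sub_apply, Pi.add_apply]
  rw [← mul_assoc, hexp]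
  ring

lemma tendsto_schlomilchPrimitive_nhdsGT_zero {a σ : ℝ} (b : ℝ) (ha : 0 < a) (hσ : 0 < σ) :
    Tendsto (schlomilchPrimitive a b σ) (𝓝[>] 0)
      (𝓝 ((exp (2 * a * b / σ ^ 2) - 1) * (√(2 * π) / 2))) := by
  have hlin : Tendsto (fun s : ℝ => b * s) (𝓝[>] 0) (𝓝 0) := by
    simpa using ((continuous_const_mul b).tendsto 0).mono_left nhdsWithin_le_nhds
  have hinv : Tendsto (fun s : ℝ => a / s) (𝓝[>] 0) atTop := by
    simpa [div_eq_mul_inv] using tendsto_inv_nhdsGT_zero.const_mul_atTop ha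
  have hminus := (hlin.add_atBot (tendsto_neg_atTop_atBot.comp hinv)).atBot_div_const hσ
  have hplus := (hlin.add_atTop hinv).atTop_div_const hσ
  have := (tendsto_gaussPrimitive_atBot.comp hminus).add
    ((tendsto_gaussPrimitive_atTop.comp hplus).const_mul (exp (2 * a * b / σ ^ 2)))
  convert this using 2
  · simp [schlomilchPrimitive, sub_eq_add_neg]
  · ring

lemma tendsto_schlomilchPrimitive_atTop {b σ : ℝ} (a : ℝ) (hb : 0 < b) (hσ : 0 < σ) :
    Tendsto (schlomilchPrimitive a b σ) atTop
      (𝓝 ((1 + exp (2 * a * b / σ ^ 2)) * (√(2 * π) / 2))) := by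
  have hlin : Tendsto (fun s : ℝ => b * s) atTop atTop := tendsto_id.const_mul_atTop hb
  have hinv : Tendsto (fun s : ℝ => a / s) atTop (𝓝 0) := tendsto_const_nhds.div_atTop tendsto_id
  have hminus := (hlin.atTop_add hinv.neg).atTop_div_const hσ
  have hplus := (hlin.atTop_add hinv).atTop_div_const hσ
  have := (tendsto_gaussPrimitive_atTop.comp hminus).add
    ((tendsto_gaussPrimitive_atTop.comp hplus).const_mul (exp (2 * a * b / σ ^ 2)))
  convert this using 2
  · simp [schlomilchPrimitive, sub_eq_add_neg]
  · ring

lemma hasDerivAt_sqrt_div_sub {T θ : ℝ} (hθ : 0 < θ) (hθT : θ < T) :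
    HasDerivAt (fun x => √(x / (T - x))) (T / (T - θ) ^ 2 / (2 * √(θ / (T - θ)))) θ := by
  have hTθ : T - θ ≠ 0 := (sub_pos.2 hθT).ne'
  refine (((hasDerivAt_id' θ).div ((hasDerivAt_id' θ).const_sub T) hTθ).sqrt
    (div_pos hθ (sub_pos.2 hθT)).ne').congr_deriv ?_
  congr 1; field_simp; ring

lemma tendsto_sqrt_div_sub_nhdsGT_zero {T : ℝ} (hT : 0 < T) :
    Tendsto (fun x => √(x / (T - x))) (𝓝[>] 0) (𝓝[>] 0) := by
  refine tendsto_nhdsWithin_iff.2 ⟨?_, ?_⟩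
  · have : ContinuousAt (fun x => √(x / (T - x))) 0 :=
      (continuousAt_id.div (continuousAt_const.sub continuousAt_id) (by simpa using hT.ne')).sqrt
    simpa using this.tendsto.mono_left nhdsWithin_le_nhds
  · filter_upwards [Ioo_mem_nhdsGT hT] with x hx
    exact sqrt_pos.2 (div_pos hx.1 (sub_pos.2 hx.2))

lemma tendsto_sqrt_div_sub_nhdsLT {T : ℝ} (hT : 0 < T) :
    Tendsto (fun x => √(x / (T - x))) (𝓝[<] T) atTop := by
  have hsub : Tendsto (fun x => T - x) (𝓝[<] T) (𝓝[>] 0) := by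
    refine tendsto_nhdsWithin_iff.2 ⟨?_, ?_⟩
    · simpa using ((continuous_sub_left T).tendsto T).mono_left nhdsWithin_le_nhds
    · filter_upwards [self_mem_nhdsWithin] with x hx using sub_pos.2 (mem_Iio.1 hx)
  have hid : Tendsto (fun x : ℝ => x) (𝓝[<] T) (𝓝 T) := nhdsWithin_le_nhds
  exact tendsto_sqrt_atTop.comp (hid.pos_mul_atTop hT hsub.inv_tendsto_nhdsGT_zero)

lemma schlomilch_exponent (a b : ℝ) {T θ : ℝ} (hθ : 0 < θ) (hθT : θ < T) :
    -(a + b) ^ 2 / (2 * T) + -((b * √(θ / (T - θ)) - a / √(θ / (T - θ))) / √T) ^ 2 / 2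
      = -a ^ 2 / (2 * θ) - b ^ 2 / (2 * (T - θ)) := by
  have hTθ : 0 < T - θ := sub_pos.2 hθT
  have hw : √(θ / (T - θ)) ^ 2 = θ / (T - θ) := sq_sqrt (div_pos hθ hTθ).le
  have hw0 : √(θ / (T - θ)) ≠ 0 := (sqrt_pos.2 (div_pos hθ hTθ)).ne'
  have hT : T ≠ 0 := (hθ.trans hθT).ne'
  rw [div_pow, sq_sqrt (hθ.trans hθT).le, sub_sq, mul_pow, div_pow, hw]
  field_simp
  ring

lemma hasDerivAt_schlomilchPrimitive_comp_sqrt_div_sub (a b : ℝ) {T θ : ℝ} (hθ : 0 < θ) (hθT : θ < T) :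
    HasDerivAt
      (fun x => a / (π * √T) * exp (-(a + b) ^ 2 / (2 * T)) *
        schlomilchPrimitive a b √T √(x / (T - x)))
      (a * b / (π * θ ^ ((1 : ℝ) / 2) * (T - θ) ^ ((3 : ℝ) / 2)) *
        exp (-a ^ 2 / (2 * θ) - b ^ 2 / (2 * (T - θ)))) θ := by
  have hTθ : 0 < T - θ := sub_pos.2 hθT
  have hT : 0 < T := hθ.trans hθT
  have hK := hasDerivAt_schlomilchPrimitive a b (sqrt_pos.2 hT).ne'
    (sqrt_pos.2 (div_pos hθ hTθ)).ne'
  refine ((hK.comp θ (hasDerivAt_sqrt_div_sub hθ hθT)).const_mul _).congr_deriv ?_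
  rw [← schlomilch_exponent a b hθ hθT, exp_add, show (3 : ℝ) / 2 = 1 + 1 / 2 by norm_num,
    rpow_add hTθ, rpow_one, ← sqrt_eq_rpow, ← sqrt_eq_rpow, sqrt_div' _ hTθ.le]
  have := (sqrt_pos.2 hθ).ne'
  have := (sqrt_pos.2 hTθ).ne'
  have := (sqrt_pos.2 hT).ne'
  field_simp
  rw [sq_sqrt hT.le, sq_sqrt hTθ.le]
  ring

/-- For `a, b, T > 0`,
`∫_0^T (ab/(π θ^{1/2} (T−θ)^{3/2}))·e^{−a²/(2θ) − b²/(2(T−θ))} dθ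
  = (2a/√(2πT))·e^{−(a+b)²/(2T)}`. -/
theorem stmt_7 (a b T : ℝ) (ha : 0 < a) (hb : 0 < b) (hT : 0 < T) :
    ∫ θ in (0 : ℝ)..T,
        a * b / (Real.pi * θ ^ ((1 : ℝ) / 2) * (T - θ) ^ ((3 : ℝ) / 2)) *
          Real.exp (-a ^ 2 / (2 * θ) - b ^ 2 / (2 * (T - θ)))
      = 2 * a / Real.sqrt (2 * Real.pi * T) * Real.exp (-(a + b) ^ 2 / (2 * T)) := by
  have hσ : 0 < √T := sqrt_pos.2 hT
  rw [intervalIntegral.integral_eq_sub_of_hasDerivAt_of_tendsto_of_nonneg hT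
    (fun θ hθ => hasDerivAt_schlomilchPrimitive_comp_sqrt_div_sub a b hθ.1 hθ.2) (fun θ hθ => ?_)
    (((tendsto_schlomilchPrimitive_nhdsGT_zero b ha hσ).comp
      (tendsto_sqrt_div_sub_nhdsGT_zero hT)).const_mul _)
    (((tendsto_schlomilchPrimitive_atTop a hb hσ).comp
      (tendsto_sqrt_div_sub_nhdsLT hT)).const_mul _)]
  · have h2π : √(2 * π) ^ 2 = 2 * π := sq_sqrt (by positivity)
    have : 0 < √(2 * π) := sqrt_pos.2 (by positivity)
    rw [sqrt_mul (x := 2 * π) (by positivity)]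
    generalize √(2 * π) = s at *
    field_simp
    linear_combination 2 * h2π
  · have := sub_pos.2 hθ.2
    have := hθ.1
    positivity
end

section
/- Let d ≥ 2, let Σ be a symmetric positive semidefinite real d×d matrix and r_1, …, r_d ∈ ℝ, and set r := Σ_{j=1}^d r_j, σ² := Σ_{j,k=1}^d Σ_{jk}, and s_i := Σ_{j=1}^d Σ_{ij} for a fixed i ∈ {1, …, d}. Assume r < 0, σ² > 0 and let α ∈ (0, 1). Define r(x) := r + (x−1)·r_i, v(x) := σ² + 2(x−1)·s_i + (x−1)²·Σ_{ii}, and q(x) := (v(x)/(2·r(x)))·ln α. Then q is differentiable at x = 1 with derivative q'(1) = ln α · (2r²·s_i − r_i·r·σ²)/(2r³). -/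
open Real

/-! The quotient rule at `x = 1`, where `v(1) = σ²`, `v'(1) = 2 sᵢ`, `r(1) = r` and `r'(1) = rᵢ`,
gives `q'(1) = ln α · (2 sᵢ · 2r − σ² · 2rᵢ) / (2r)²`, which simplifies to the claimed value. -/

theorem hasDerivAt_add_sub_mul (a b x₀ : ℝ) :
    HasDerivAt (fun x => a + (x - x₀) * b) b x₀ := by
  simpa using (((hasDerivAt_id x₀).sub_const x₀).mul_const b).const_add a

theorem hasDerivAt_add_two_mul_sub_add_sq_mul (a b c x₀ : ℝ) :
    HasDerivAt (fun x => a + 2 * (x - x₀) * b + (x - x₀) ^ 2 * c) (2 * b) x₀ := by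
  have hshift : HasDerivAt (fun x : ℝ => x - x₀) 1 x₀ := (hasDerivAt_id x₀).sub_const x₀
  simpa using
    (((hshift.const_mul 2).mul_const b).const_add a).fun_add ((hshift.pow 2).mul_const c)

theorem stmt_12_general (d : ℕ)
    (C : Matrix (Fin d) (Fin d) ℝ)
    (rv : Fin d → ℝ) (r : ℝ)
    (σ2 : ℝ)
    (i : Fin d) (si : ℝ)
    (hrneg : r < 0) (α : ℝ)
    (rf vf q : ℝ → ℝ)
    (hrf : rf = fun x => r + (x - 1) * rv i)
    (hvf : vf = fun x => σ2 + 2 * (x - 1) * si + (x - 1) ^ 2 * C i i)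
    (hq : q = fun x => vf x / (2 * rf x) * Real.log α) :
    HasDerivAt q (Real.log α * (2 * r ^ 2 * si - rv i * r * σ2) / (2 * r ^ 3)) 1 := by
  have hv : HasDerivAt vf (2 * si) 1 :=
    hvf ▸ hasDerivAt_add_two_mul_sub_add_sq_mul σ2 si (C i i) 1
  have hρ : HasDerivAt rf (rv i) 1 := hrf ▸ hasDerivAt_add_sub_mul r (rv i) 1
  have hv1 : vf 1 = σ2 := by simp [hvf]
  have hρ1 : rf 1 = r := by simp [hrf]
  subst hq
  refine ((hv.fun_div (hρ.const_mul 2) (by simp [hρ1, hrneg.ne])).mul_const (log α)).congr_deriv ?_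
  rw [hv1, hρ1]
  field_simp

/-- In the Brownian risk model with drift vector `rv` and covariance matrix
`C`, with `r = ∑ⱼ rvⱼ < 0`, `σ² = ∑_{j,k} C j k > 0`, `sᵢ = ∑ⱼ C i j` and `α ∈ (0,1)`,
the weighted dynamic value-at-risk `q(x) = v(x)/(2 r(x))·ln α`, where
`r(x) = r + (x−1) rvᵢ` and `v(x) = σ² + 2(x−1) sᵢ + (x−1)² Cᵢᵢ`, is differentiable at
`x = 1` with derivative `ln α·(2r² sᵢ − rᵢ r σ²)/(2r³)`. -/
theorem stmt_12 (d : ℕ) (hd : 2 ≤ d)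
    (C : Matrix (Fin d) (Fin d) ℝ) (hC : C.PosSemidef)
    (rv : Fin d → ℝ) (r : ℝ) (hr : r = ∑ j, rv j)
    (σ2 : ℝ) (hσ2 : σ2 = ∑ j, ∑ k, C j k)
    (i : Fin d) (si : ℝ) (hsi : si = ∑ j, C i j)
    (hrneg : r < 0) (hσ2pos : 0 < σ2) (α : ℝ) (hα : α ∈ Set.Ioo (0 : ℝ) 1)
    (rf vf q : ℝ → ℝ)
    (hrf : rf = fun x => r + (x - 1) * rv i)
    (hvf : vf = fun x => σ2 + 2 * (x - 1) * si + (x - 1) ^ 2 * C i i)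
    (hq : q = fun x => vf x / (2 * rf x) * Real.log α) :
    HasDerivAt q (Real.log α * (2 * r ^ 2 * si - rv i * r * σ2) / (2 * r ^ 3)) 1 :=
  stmt_12_general d C rv r σ2 i si hrneg α rf vf q hrf hvf hq
end

section
/- Let α ∈ (0, 1), r_1 < 0, r_2 < 0, σ_1 ≥ 0, σ_2 ≥ 0 and ρ ∈ [−1, 1]. Then ((σ_1² + 2ρσ_1σ_2 + σ_2²)/(2(r_1 + r_2)))·ln α ≤ (σ_1²/(2r_1))·ln α + (σ_2²/(2r_2))·ln α. -/
open Real

/-!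
The sum of the two risk processes has variance parameter at most `(σ₁ + σ₂)²` because `ρ ≤ 1`,
and the value-at-risk grows with the variance parameter. Writing the value-at-risk as
`v / (-r) · (-ln α / 2)`, sub-additivity for perfectly correlated processes is Sedrakyan's
inequality `(σ₁ + σ₂)² / (a + b) ≤ σ₁² / a + σ₂² / b` for `a = -r₁ > 0`, `b = -r₂ > 0`.
-/

/-- The infinite-horizon dynamic value-at-risk at level `α` of a Brownian motion with drift `r < 0`
and variance parameter `v`. -/
noncomputable def brownianDynamicVaR (α r v : ℝ) : ℝ := v / (2 * r) * log α

theorem sq_add_div_add_le_sq_div_add_sq_div {R : Type*} [Semifield R] [LinearOrder R]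
    [IsStrictOrderedRing R] [ExistsAddOfLE R] (x y : R) {a b : R} (ha : 0 < a) (hb : 0 < b) :
    (x + y) ^ 2 / (a + b) ≤ x ^ 2 / a + y ^ 2 / b := by
  have h := Finset.sq_sum_div_le_sum_sq_div Finset.univ ![x, y] (g := ![a, b])
    (by simp [Fin.forall_fin_two, ha, hb])
  simpa [Fin.sum_univ_two] using h

theorem correlated_variance_le_sq_add {σ₁ σ₂ ρ : ℝ} (hσ₁ : 0 ≤ σ₁) (hσ₂ : 0 ≤ σ₂) (hρ : ρ ≤ 1) :
    σ₁ ^ 2 + 2 * ρ * σ₁ * σ₂ + σ₂ ^ 2 ≤ (σ₁ + σ₂) ^ 2 := by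
  have := mul_le_mul_of_nonneg_right hρ (mul_nonneg hσ₁ hσ₂)
  nlinarith

namespace brownianDynamicVaR

theorem eq_div_neg_mul (α r v : ℝ) :
    brownianDynamicVaR α r v = v / (-r) * (-log α / 2) := by
  unfold brownianDynamicVaR
  ring

variable {α : ℝ}

theorem monotone (hα₀ : 0 ≤ α) (hα₁ : α ≤ 1) {r : ℝ} (hr : r < 0) :
    Monotone (brownianDynamicVaR α r) := by
  intro v w hvw
  simp only [eq_div_neg_mul]
  have hlog : log α ≤ 0 := log_nonpos hα₀ hα₁
  gcongr <;> linarith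

theorem sq_add_le (hα₀ : 0 ≤ α) (hα₁ : α ≤ 1) {r₁ r₂ : ℝ} (hr₁ : r₁ < 0) (hr₂ : r₂ < 0)
    (σ₁ σ₂ : ℝ) :
    brownianDynamicVaR α (r₁ + r₂) ((σ₁ + σ₂) ^ 2)
      ≤ brownianDynamicVaR α r₁ (σ₁ ^ 2) + brownianDynamicVaR α r₂ (σ₂ ^ 2) := by
  have hlog : log α ≤ 0 := log_nonpos hα₀ hα₁
  have hsedrakyan := sq_add_div_add_le_sq_div_add_sq_div σ₁ σ₂ (neg_pos.2 hr₁) (neg_pos.2 hr₂)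
  simp only [eq_div_neg_mul, neg_add, ← add_mul]
  gcongr
  linarith

end brownianDynamicVaR

/-- Sub-additivity of the infinite-horizon dynamic VaR for correlated
Brownian risk processes: for `α ∈ (0,1)`, `r₁, r₂ < 0`, `σ₁, σ₂ ≥ 0` and `ρ ∈ [−1,1]`,
`((σ₁² + 2ρσ₁σ₂ + σ₂²)/(2(r₁+r₂)))·ln α ≤ (σ₁²/(2r₁))·ln α + (σ₂²/(2r₂))·ln α`. -/
theorem stmt_13 (α r₁ r₂ σ₁ σ₂ ρ : ℝ) (hα : α ∈ Set.Ioo (0 : ℝ) 1)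
    (hr₁ : r₁ < 0) (hr₂ : r₂ < 0) (hσ₁ : 0 ≤ σ₁) (hσ₂ : 0 ≤ σ₂)
    (hρ : ρ ∈ Set.Icc (-1 : ℝ) 1) :
    (σ₁ ^ 2 + 2 * ρ * σ₁ * σ₂ + σ₂ ^ 2) / (2 * (r₁ + r₂)) * Real.log α
      ≤ σ₁ ^ 2 / (2 * r₁) * Real.log α + σ₂ ^ 2 / (2 * r₂) * Real.log α := by
  obtain ⟨hα₀, hα₁⟩ := hα
  show brownianDynamicVaR α (r₁ + r₂) (σ₁ ^ 2 + 2 * ρ * σ₁ * σ₂ + σ₂ ^ 2)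
    ≤ brownianDynamicVaR α r₁ (σ₁ ^ 2) + brownianDynamicVaR α r₂ (σ₂ ^ 2)
  calc _ ≤ brownianDynamicVaR α (r₁ + r₂) ((σ₁ + σ₂) ^ 2) :=
        brownianDynamicVaR.monotone hα₀.le hα₁.le (add_neg hr₁ hr₂)
          (correlated_variance_le_sq_add hσ₁ hσ₂ hρ.2)
    _ ≤ _ := brownianDynamicVaR.sq_add_le hα₀.le hα₁.le hr₁ hr₂ σ₁ σ₂
end

section
/- Let d ≥ 2, let Σ be a symmetric positive semidefinite real d×d matrix and r_1, …, r_d ∈ ℝ, set r := Σ_{j=1}^d r_j, σ² := Σ_{j,k=1}^d Σ_{jk}, and s_i := Σ_{j=1}^d Σ_{ij}. Assume r < 0 and σ² > 0, and let α ∈ (0, 1). Let N ⊆ {1, …, d} be a nonempty subset with r_N := Σ_{i∈N} r_i < 0, and set σ_N² := Σ_{i,j∈N} Σ_{ij}. Then Σ_{i∈N} ln α·(2r²·s_i − r_i·r·σ²)/(2r³) ≤ (σ_N²/(2·r_N))·ln α. -/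
/-!
With `A = ∑_{i∈N} sᵢ`, positive semidefiniteness of `Σ` at the vector `r·1_N - r_N·1` gives
`2 r r_N A ≤ r² σ_N² + r_N² σ²`. The stand-alone capital minus the allocated capital equals
`ln α · (r² σ_N² + r_N² σ² - 2 r r_N A) / (2 r_N r²)`, a quotient of two non-positive numbers.
-/

open Real Finset Matrix

theorem Matrix.PosSemidef.two_mul_mul_dotProduct_mulVec_le {ι : Type*} [Fintype ι]
    {C : Matrix ι ι ℝ} (hC : C.PosSemidef) (x y : ι → ℝ) (a b : ℝ) :
    2 * a * b * (x ⬝ᵥ C *ᵥ y) ≤ a ^ 2 * (x ⬝ᵥ C *ᵥ x) + b ^ 2 * (y ⬝ᵥ C *ᵥ y) := by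
  have hswap : y ⬝ᵥ C *ᵥ x = x ⬝ᵥ C *ᵥ y := by
    rw [dotProduct_mulVec, dotProduct_comm, ← mulVec_transpose,
      (isHermitian_iff_isSymm.mp hC.1).eq]
  have h := hC.dotProduct_mulVec_nonneg (a • x - b • y)
  simp only [star_trivial, mulVec_sub, mulVec_smul, dotProduct_sub, sub_dotProduct,
    dotProduct_smul, smul_dotProduct, smul_eq_mul, hswap] at h
  linarith

theorem Matrix.indicator_dotProduct_mulVec_indicator {ι : Type*} [Fintype ι]
    (C : Matrix ι ι ℝ) (N M : Finset ι) :
    (N : Set ι).indicator 1 ⬝ᵥ C *ᵥ (M : Set ι).indicator 1 = ∑ i ∈ N, ∑ j ∈ M, C i j := by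
  classical
  simp [dotProduct, mulVec, Set.indicator_apply, ite_mul, mul_ite, sum_ite_mem]

theorem mul_sub_div_le_div_mul_of_nonpos {L r rN σ2 σN2 A : ℝ} (hL : L ≤ 0) (hr : r ≠ 0)
    (hrN : rN < 0) (hQ : 2 * r * rN * A ≤ r ^ 2 * σN2 + rN ^ 2 * σ2) :
    L * (2 * r ^ 2 * A - rN * r * σ2) / (2 * r ^ 3) ≤ σN2 / (2 * rN) * L := by
  have hgap : σN2 / (2 * rN) * L - L * (2 * r ^ 2 * A - rN * r * σ2) / (2 * r ^ 3)
      = L * (r ^ 2 * σN2 + rN ^ 2 * σ2 - 2 * r * rN * A) / (2 * rN * r ^ 2) := by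
    field_simp [hrN.ne]
    ring
  have hgap_nonneg :
      0 ≤ L * (r ^ 2 * σN2 + rN ^ 2 * σ2 - 2 * r * rN * A) / (2 * rN * r ^ 2) :=
    div_nonneg_of_nonpos (mul_nonpos_of_nonpos_of_nonneg hL (by linarith))
      (mul_nonpos_of_nonpos_of_nonneg (by linarith) (sq_nonneg r))
  linarith

theorem stmt_19_general (d : ℕ)
    (C : Matrix (Fin d) (Fin d) ℝ) (hC : C.PosSemidef)
    (rv : Fin d → ℝ) (r σ2 : ℝ) (hσ2 : σ2 = ∑ j, ∑ k, C j k)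
    (hrneg : r < 0) (α : ℝ) (hα : α ∈ Set.Ioo (0 : ℝ) 1)
    (N : Finset (Fin d))
    (rN : ℝ) (hrN : rN = ∑ i ∈ N, rv i) (hrNneg : rN < 0)
    (σN2 : ℝ) (hσN2 : σN2 = ∑ i ∈ N, ∑ j ∈ N, C i j) :
    ∑ i ∈ N, Real.log α * (2 * r ^ 2 * (∑ j, C i j) - rv i * r * σ2) / (2 * r ^ 3)
      ≤ σN2 / (2 * rN) * Real.log α := by
  have hsum : ∑ i ∈ N, Real.log α * (2 * r ^ 2 * (∑ j, C i j) - rv i * r * σ2) / (2 * r ^ 3)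
      = Real.log α * (2 * r ^ 2 * (∑ i ∈ N, ∑ j, C i j) - rN * r * σ2) / (2 * r ^ 3) := by
    rw [← sum_div, ← mul_sum, sum_sub_distrib, ← mul_sum, ← sum_mul, ← sum_mul, hrN]
  have hQ := hC.two_mul_mul_dotProduct_mulVec_le ((N : Set (Fin d)).indicator 1)
    (((univ : Finset (Fin d)) : Set (Fin d)).indicator 1) r rN
  simp only [indicator_dotProduct_mulVec_indicator, ← hσN2, ← hσ2] at hQ
  rw [hsum]
  exact mul_sub_div_le_div_mul_of_nonpos (log_nonpos hα.1.le hα.2.le) hrneg.ne hrNneg hQ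

/-- ('No undercut' property.) In the Brownian risk model with drift vector
`rv` and covariance matrix `C`, with `r = ∑ⱼ rvⱼ < 0`, `σ² = ∑_{j,k} C j k > 0` and
`α ∈ (0,1)`: for any nonempty sub-portfolio `N` with `r_N = ∑_{i∈N} rvᵢ < 0` and
`σ_N² = ∑_{i,j∈N} C i j`, the total gradient allocation of `N` does not exceed the
stand-alone capital of `N`:
`∑_{i∈N} ln α·(2r²·sᵢ − rᵢ·r·σ²)/(2r³) ≤ (σ_N²/(2r_N))·ln α` where `sᵢ = ∑ⱼ C i j`. -/
theorem stmt_19 (d : ℕ) (hd : 2 ≤ d)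
    (C : Matrix (Fin d) (Fin d) ℝ) (hC : C.PosSemidef)
    (rv : Fin d → ℝ) (r σ2 : ℝ) (hr : r = ∑ j, rv j) (hσ2 : σ2 = ∑ j, ∑ k, C j k)
    (hrneg : r < 0) (hσ2pos : 0 < σ2) (α : ℝ) (hα : α ∈ Set.Ioo (0 : ℝ) 1)
    (N : Finset (Fin d)) (hN : N.Nonempty)
    (rN : ℝ) (hrN : rN = ∑ i ∈ N, rv i) (hrNneg : rN < 0)
    (σN2 : ℝ) (hσN2 : σN2 = ∑ i ∈ N, ∑ j ∈ N, C i j) :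
    ∑ i ∈ N, Real.log α * (2 * r ^ 2 * (∑ j, C i j) - rv i * r * σ2) / (2 * r ^ 3)
      ≤ σN2 / (2 * rN) * Real.log α :=
  stmt_19_general d C hC rv r σ2 hσ2 hrneg α hα N rN hrN hrNneg σN2 hσN2
end
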